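/- arXiv:2602.17006 — 2 statements merged into one kernel-verified Lean document; each statement's English description precedes it below -/
import Mathlib

section
/- For a Poisson random variable Z with parameter λ > 0 and any positive integer m, the m-th moment satisfies E[Z^m] ≤ (m / log(m/λ + 1))^m. -/
/-!
Chernoff's method for moments: from `y ≤ exp (y - 1)` one gets `x ^ m ≤ (m / t) ^ m * exp (t x - m)`
for every `t > 0`, so `E[Z ^ m] ≤ (m / t) ^ m * exp (-m) * E[exp (t Z)]`, and the Poisson moment
generating function is `E[exp (t Z)] = exp (λ (exp t - 1))`. The choice `exp t = m / λ + 1` makes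
`λ (exp t - 1) = m`, so the exponential factors cancel.
-/

open Real

theorem pow_le_pow_mul_exp_sub (m : ℕ) {y : ℝ} (hy : 0 ≤ y) :
    y ^ m ≤ (m : ℝ) ^ m * exp (y - m) := by
  rcases m.eq_zero_or_pos with rfl | hm
  · simpa using one_le_exp hy
  have hm' : (0 : ℝ) < m := by exact_mod_cast hm
  have hlin : y ≤ m * exp (y / m - 1) := by
    have := add_one_le_exp (y / m - 1)
    rwa [sub_add_cancel, div_le_iff₀' hm'] at this
  calc y ^ m ≤ ((m : ℝ) * exp (y / m - 1)) ^ m := pow_le_pow_left₀ hy hlin m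
    _ = (m : ℝ) ^ m * exp (y - m) := by
      rw [mul_pow, ← exp_nat_mul]
      congr 2
      field_simp

theorem pow_le_div_pow_mul_exp (m : ℕ) {t x : ℝ} (ht : 0 < t) (hx : 0 ≤ x) :
    x ^ m ≤ (m / t) ^ m * exp (t * x - m) := by
  have h := pow_le_pow_mul_exp_sub m (mul_nonneg ht.le hx)
  rw [mul_pow, ← le_div_iff₀' (by positivity)] at h
  rwa [div_pow, div_mul_eq_mul_div]

theorem hasSum_exp_mul_poisson (lam t : ℝ) :
    HasSum (fun n : ℕ => exp (t * n) * (exp (-lam) * lam ^ n / n.factorial))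
      (exp (lam * (exp t - 1))) := by
  have h := (NormedSpace.expSeries_div_hasSum_exp (lam * exp t)).mul_left (exp (-lam))
  rw [← exp_eq_exp_ℝ, ← exp_add, neg_add_eq_sub, ← mul_sub_one] at h
  refine h.congr_fun fun n => ?_
  rw [mul_pow, ← exp_nat_mul, mul_comm (n : ℝ) t]
  ring

theorem poisson_moment_le_of_pos {lam : ℝ} (hlam : 0 ≤ lam) (m : ℕ) {t : ℝ} (ht : 0 < t) :
    ∑' n : ℕ, (n : ℝ) ^ m * (exp (-lam) * lam ^ n / n.factorial) ≤
      (m / t) ^ m * exp (lam * (exp t - 1) - m) := by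
  set p : ℕ → ℝ := fun n => exp (-lam) * lam ^ n / n.factorial
  have hp : ∀ n, 0 ≤ p n := fun n => by positivity
  have hdom : HasSum (fun n : ℕ => (m / t) ^ m * exp (-m) * (exp (t * n) * p n))
      ((m / t) ^ m * exp (-m) * exp (lam * (exp t - 1))) :=
    (hasSum_exp_mul_poisson lam t).mul_left _
  have hle : ∀ n : ℕ, (n : ℝ) ^ m * p n ≤ (m / t) ^ m * exp (-m) * (exp (t * n) * p n) := by
    intro n
    calc (n : ℝ) ^ m * p n ≤ (m / t) ^ m * exp (t * n - m) * p n :=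
          mul_le_mul_of_nonneg_right (pow_le_div_pow_mul_exp m ht n.cast_nonneg) (hp n)
      _ = (m / t) ^ m * exp (-m) * (exp (t * n) * p n) := by
        rw [sub_eq_add_neg, exp_add]
        ring
  have hsum : Summable fun n : ℕ => (n : ℝ) ^ m * p n :=
    hdom.summable.of_nonneg_of_le (fun n => mul_nonneg (by positivity) (hp n)) hle
  calc ∑' n : ℕ, (n : ℝ) ^ m * p n ≤ (m / t) ^ m * exp (-m) * exp (lam * (exp t - 1)) :=
        hasSum_le hle hsum.hasSum hdom
    _ = (m / t) ^ m * exp (lam * (exp t - 1) - m) := by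
      rw [mul_assoc, ← exp_add, neg_add_eq_sub]

/-- For a Poisson random variable `Z` with parameter `λ > 0` and any positive integer `m`,
the `m`-th moment satisfies `E[Z^m] ≤ (m / log (m/λ + 1))^m`. The expectation is written
as the series `∑' n, n^m * (exp (-λ) * λ^n / n!)`. -/
theorem poisson_moment_bound (lam : ℝ) (hlam : 0 < lam) (m : ℕ) (hm : 1 ≤ m) :
    ∑' n : ℕ, (n : ℝ) ^ m * (Real.exp (-lam) * lam ^ n / n.factorial) ≤
      ((m : ℝ) / Real.log ((m : ℝ) / lam + 1)) ^ m := by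
  have hmlam : (0 : ℝ) < m / lam := div_pos (by exact_mod_cast hm) hlam
  set t := log ((m : ℝ) / lam + 1)
  have ht : 0 < t := log_pos (by linarith)
  have hexp : lam * (exp t - 1) = m := by
    rw [exp_log (by linarith), add_sub_cancel_right, mul_div_cancel₀ _ hlam.ne']
  simpa [hexp] using poisson_moment_le_of_pos hlam.le m ht
end

section
/- In dimension 2, let x, y be distinct points and B_{x,y} := B(x,|x−y|) ∩ B(y,|x−y|) be the lens of the relative neighborhood graph. Then the circular sector with apex x, radius |x−y|, angular width 2π/3, and axis through y is contained in B_{x,y}. -/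
open InnerProductGeometry Metric

/-
By the law of cosines, `‖u - v‖² = ‖u‖² + ‖v‖² - 2‖u‖‖v‖ cos ∠(u, v)`. An angle of at most `π/3`
has cosine at least `1/2`, so `‖u - v‖² ≤ ‖v‖² + ‖u‖ (‖u‖ - ‖v‖) ≤ ‖v‖²` as soon as `‖u‖ ≤ ‖v‖`.
Applied to `u = z - x`, `v = y - x` this puts every point `z` of the sector within `|x - y|` of `y`.
-/

namespace InnerProductGeometry

variable {V : Type*} [NormedAddCommGroup V] [InnerProductSpace ℝ V]

lemma one_half_le_cos_angle_of_angle_le_pi_div_three {u v : V} (h : angle u v ≤ Real.pi / 3) :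
    1 / 2 ≤ Real.cos (angle u v) := by
  rw [← Real.cos_pi_div_three]
  exact Real.cos_le_cos_of_nonneg_of_le_pi (angle_nonneg u v)
    (by linarith [Real.pi_pos]) h

lemma norm_sub_le_norm_of_angle_le_pi_div_three {u v : V} (huv : ‖u‖ ≤ ‖v‖)
    (h : angle u v ≤ Real.pi / 3) : ‖u - v‖ ≤ ‖v‖ := by
  have hcos := one_half_le_cos_angle_of_angle_le_pi_div_three h
  have hu := norm_nonneg u
  have hv := norm_nonneg v
  have hsq : ‖u - v‖ * ‖u - v‖ ≤ ‖v‖ * ‖v‖ := by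
    rw [norm_sub_sq_eq_norm_sq_add_norm_sq_sub_two_mul_norm_mul_norm_mul_cos_angle]
    nlinarith [mul_le_mul_of_nonneg_left hcos (mul_nonneg hu hv), mul_le_mul_of_nonneg_left huv hu]
  exact (mul_self_le_mul_self_iff (norm_nonneg _) hv).2 hsq

end InnerProductGeometry

theorem sector_subset_lens_general (x y : EuclideanSpace ℝ (Fin 2)) :
    {z : EuclideanSpace ℝ (Fin 2) |
        dist z x ≤ dist x y ∧ InnerProductGeometry.angle (z - x) (y - x) ≤ Real.pi / 3} ⊆
      Metric.closedBall x (dist x y) ∩ Metric.closedBall y (dist x y) := by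
  rintro z ⟨hzx, hangle⟩
  refine ⟨hzx, ?_⟩
  rw [dist_comm x y, dist_eq_norm, dist_eq_norm] at hzx
  rw [mem_closedBall, dist_comm x y, dist_eq_norm, dist_eq_norm,
    show z - y = (z - x) - (y - x) by abel]
  exact norm_sub_le_norm_of_angle_le_pi_div_three hzx hangle

/-- In dimension 2, for distinct points `x, y` the circular sector with apex `x`, radius
`|x − y|`, angular width `2π/3` (i.e. half-angle `π/3`) and axis through `y` is contained
in the lens `B(x, |x−y|) ∩ B(y, |x−y|)` of the relative neighborhood graph. -/
theorem sector_subset_lens (x y : EuclideanSpace ℝ (Fin 2)) (hxy : x ≠ y) :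
    {z : EuclideanSpace ℝ (Fin 2) |
        dist z x ≤ dist x y ∧ InnerProductGeometry.angle (z - x) (y - x) ≤ Real.pi / 3} ⊆
      Metric.closedBall x (dist x y) ∩ Metric.closedBall y (dist x y) :=
  sector_subset_lens_general x y
end
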